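/- Let P_{ij} (1 ≤ i ≤ n, 1 ≤ j ≤ m) be orthogonal projections on a finite-dimensional complex inner product space and ψ a unit vector. Define V = (1/(nm)) Σ_{i,j} ‖P_{ij} ψ‖² and F = (1/(n² m³)) Σ_{i₁,i₂,j₁,j₂,j₃} ‖P_{i₂ j₃} P_{i₂ j₂} P_{i₁ j₁} ψ‖². Then F ≥ V⁶. -/

import Mathlib

/-!
Write `Rᵢ = ∑ⱼ Pᵢⱼ`, `A = ∑ᵢ Rᵢ` and `u = A ψ`. Since the `Pᵢⱼ` are orthogonal projections,
`∑ ‖Pᵢⱼ ψ‖² = re ⟪ψ, u⟫ ≤ ‖u‖`. Because `A` and the `Rᵢ` are symmetric, Cauchy–Schwarz gives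
`‖u‖² = re ⟪ψ, A u⟫ ≤ ‖A u‖`, `‖A u‖² ≤ n ∑ᵢ ‖Rᵢ u‖²` and
`∑ᵢ ‖Rᵢ u‖² = re ⟪u, ∑ᵢ Rᵢ (Rᵢ u)⟫ ≤ ‖u‖ ‖∑ᵢ Rᵢ (Rᵢ u)‖`, hence `‖u‖³ ≤ n ‖∑ᵢ Rᵢ (Rᵢ u)‖`.
Expanding `∑ᵢ Rᵢ (Rᵢ u)` into the `n²m³` vectors `P_{i₂j₃} P_{i₂j₂} P_{i₁j₁} ψ` and applying
Cauchy–Schwarz once more yields `(∑ ‖Pᵢⱼ ψ‖²)⁶ ≤ ‖u‖⁶ ≤ n⁴ m³ ∑ ‖P_{i₂j₃} P_{i₂j₂} P_{i₁j₁} ψ‖²`,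
which is `F ≥ V⁶` after normalising.
-/

open Finset RCLike
open scoped InnerProductSpace

theorem norm_sum_sq_le_card_mul_sum_norm_sq {ι E : Type*} [Fintype ι] [SeminormedAddCommGroup E]
    (w : ι → E) : ‖∑ i, w i‖ ^ 2 ≤ Fintype.card ι * ∑ i, ‖w i‖ ^ 2 :=
  calc ‖∑ i, w i‖ ^ 2 ≤ (∑ i, ‖w i‖) ^ 2 := by gcongr; exact norm_sum_le _ _
    _ ≤ Fintype.card ι * ∑ i, ‖w i‖ ^ 2 := by
      simpa using sq_sum_le_card_mul_sum_sq (s := univ) (f := fun i => ‖w i‖)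

theorem one_div_mul_pow_six_le {s F a b : ℝ} (h : s ^ 6 ≤ a ^ 4 * b ^ 3 * F) :
    (1 / (a * b) * s) ^ 6 ≤ 1 / (a ^ 2 * b ^ 3) * F := by
  obtain rfl | ha := eq_or_ne a 0
  · simp
  obtain rfl | hb := eq_or_ne b 0
  · simp
  rw [one_div_mul_eq_div, div_pow, div_le_iff₀ (by positivity)]
  refine h.trans_eq ?_
  field_simp

namespace LinearMap

variable {𝕜 E : Type*} [RCLike 𝕜] [SeminormedAddCommGroup E] [InnerProductSpace 𝕜 E]

theorem IsSymmetric.norm_apply_sq {T : E →ₗ[𝕜] E} (hT : T.IsSymmetric) (x : E) :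
    ‖T x‖ ^ 2 = re ⟪x, T (T x)⟫_𝕜 := by
  rw [← hT, inner_self_eq_norm_sq]

theorem IsSymmetric.norm_apply_sq_le {T : E →ₗ[𝕜] E} (hT : T.IsSymmetric) (x : E) :
    ‖T x‖ ^ 2 ≤ ‖x‖ * ‖T (T x)‖ :=
  hT.norm_apply_sq x ▸ re_inner_le_norm _ _

theorem IsSymmetricProjection.norm_apply_sq {P : E →ₗ[𝕜] E} (hP : P.IsSymmetricProjection)
    (x : E) : ‖P x‖ ^ 2 = re ⟪x, P x⟫_𝕜 := by
  rw [hP.isSymmetric.norm_apply_sq, ← Module.End.mul_apply, hP.isIdempotentElem.eq]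

theorem sum_norm_sq_le_of_isSymmetricProjection {ι : Type*} [Fintype ι]
    {P : ι → E →ₗ[𝕜] E} (hP : ∀ i, (P i).IsSymmetricProjection) (x : E) :
    ∑ i, ‖P i x‖ ^ 2 ≤ ‖x‖ * ‖∑ i, P i x‖ := by
  simp only [fun i => (hP i).norm_apply_sq x, ← map_sum, ← inner_sum]
  exact re_inner_le_norm _ _

theorem norm_sum_apply_pow_three_le_card_mul {ι : Type*} [Fintype ι] {R : ι → E →ₗ[𝕜] E}
    (hR : ∀ i, (R i).IsSymmetric) {ψ : E} (hψ : ‖ψ‖ ≤ 1) :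
    ‖(∑ i, R i) ψ‖ ^ 3 ≤ Fintype.card ι * ‖∑ i, R i (R i ((∑ i, R i) ψ))‖ := by
  set A := ∑ i, R i
  set u := A ψ
  have hA : A.IsSymmetric := isSymmetric_sum _ fun i _ => hR i
  have h_u : ‖u‖ ^ 2 ≤ ‖A u‖ :=
    (hA.norm_apply_sq_le ψ).trans (mul_le_of_le_one_left (norm_nonneg _) hψ)
  have h_Au : ‖A u‖ ^ 2 ≤ Fintype.card ι * ∑ i, ‖R i u‖ ^ 2 := by
    simpa [A, LinearMap.sum_apply] using norm_sum_sq_le_card_mul_sum_norm_sq fun i => R i u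
  have h_R : ∑ i, ‖R i u‖ ^ 2 ≤ ‖u‖ * ‖∑ i, R i (R i u)‖ := by
    simp only [fun i => (hR i).norm_apply_sq u, ← map_sum, ← inner_sum]
    exact re_inner_le_norm _ _
  have h_cube : ‖u‖ * ‖u‖ ^ 3 ≤ ‖u‖ * (Fintype.card ι * ‖∑ i, R i (R i u)‖) :=
    calc ‖u‖ * ‖u‖ ^ 3 = (‖u‖ ^ 2) ^ 2 := by ring
      _ ≤ ‖A u‖ ^ 2 := by gcongr
      _ ≤ Fintype.card ι * ∑ i, ‖R i u‖ ^ 2 := h_Au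
      _ ≤ Fintype.card ι * (‖u‖ * ‖∑ i, R i (R i u)‖) := by gcongr
      _ = ‖u‖ * (Fintype.card ι * ‖∑ i, R i (R i u)‖) := by ring
  rcases (norm_nonneg u).eq_or_lt with hu | hu
  · rw [← hu, zero_pow three_ne_zero]
    positivity
  · exact le_of_mul_le_mul_left h_cube hu

theorem norm_sum_apply_apply_sq_le {ι κ : Type*} [Fintype ι] [Fintype κ] (P : ι → κ → E →ₗ[𝕜] E)
    (ψ : E) :
    ‖∑ i, (∑ j, P i j) ((∑ j, P i j) ((∑ i, ∑ j, P i j) ψ))‖ ^ 2 ≤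
      Fintype.card ι ^ 2 * Fintype.card κ ^ 3 *
        ∑ i₁, ∑ i₂, ∑ j₁, ∑ j₂, ∑ j₃, ‖P i₂ j₃ (P i₂ j₂ (P i₁ j₁ ψ))‖ ^ 2 := by
  have h_expand : ∑ i, (∑ j, P i j) ((∑ j, P i j) ((∑ i, ∑ j, P i j) ψ)) =
      ∑ i₁, ∑ i₂, ∑ j₁, ∑ j₂, ∑ j₃, P i₂ j₃ (P i₂ j₂ (P i₁ j₁ ψ)) := by
    simp only [map_sum, LinearMap.sum_apply]
    exact Finset.sum_comm
  have := norm_sum_sq_le_card_mul_sum_norm_sq fun k : ι × ι × κ × κ × κ =>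
    P k.2.1 k.2.2.2.2 (P k.2.1 k.2.2.2.1 (P k.1 k.2.2.1 ψ))
  simp only [Fintype.sum_prod_type, Fintype.card_prod] at this
  rw [h_expand]
  convert this using 1
  push_cast
  ring

end LinearMap

theorem projection_rewinding_two_index_general
    {E : Type*} [NormedAddCommGroup E] [InnerProductSpace ℂ E]
    {n m : ℕ}
    (P : Fin n → Fin m → (E →ₗ[ℂ] E))
    (hproj : ∀ i j, (P i j) ∘ₗ (P i j) = P i j)
    (hsym : ∀ i j, (P i j).IsSymmetric)
    (ψ : E) (hψ : ‖ψ‖ = 1) :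
    (1 / ((n : ℝ) ^ 2 * (m : ℝ) ^ 3)) *
      ∑ i₁ : Fin n, ∑ i₂ : Fin n, ∑ j₁ : Fin m, ∑ j₂ : Fin m, ∑ j₃ : Fin m,
        ‖P i₂ j₃ (P i₂ j₂ (P i₁ j₁ ψ))‖ ^ 2
      ≥ ((1 / ((n : ℝ) * (m : ℝ))) * ∑ i : Fin n, ∑ j : Fin m, ‖P i j ψ‖ ^ 2) ^ 6 := by
  set u := (∑ i, ∑ j, P i j) ψ
  set v := ∑ i, (∑ j, P i j) ((∑ j, P i j) u)
  set F := ∑ i₁ : Fin n, ∑ i₂ : Fin n, ∑ j₁ : Fin m, ∑ j₂ : Fin m, ∑ j₃ : Fin m,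
    ‖P i₂ j₃ (P i₂ j₂ (P i₁ j₁ ψ))‖ ^ 2
  set s := ∑ i : Fin n, ∑ j : Fin m, ‖P i j ψ‖ ^ 2
  have h_s : s ≤ ‖u‖ := by
    simpa [Fintype.sum_prod_type, hψ, u, LinearMap.sum_apply] using
      LinearMap.sum_norm_sq_le_of_isSymmetricProjection (ι := Fin n × Fin m) (P := fun k => P k.1 k.2)
        (fun k => ⟨hproj k.1 k.2, hsym k.1 k.2⟩) ψ
  have h_cube : ‖u‖ ^ 3 ≤ n * ‖v‖ := by
    simpa only [Fintype.card_fin] using LinearMap.norm_sum_apply_pow_three_le_card_mul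
      (fun i => LinearMap.isSymmetric_sum _ fun j _ => hsym i j) hψ.le
  have h_v : ‖v‖ ^ 2 ≤ n ^ 2 * m ^ 3 * F := by
    simpa only [Fintype.card_fin] using LinearMap.norm_sum_apply_apply_sq_le P ψ
  refine one_div_mul_pow_six_le ?_
  calc s ^ 6 ≤ (‖u‖ ^ 3) ^ 2 := by rw [← pow_mul]; gcongr
    _ ≤ (n * ‖v‖) ^ 2 := by gcongr
    _ ≤ n ^ 2 * (n ^ 2 * m ^ 3 * F) := by rw [mul_pow]; gcongr
    _ = n ^ 4 * m ^ 3 * F := by ring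

theorem projection_rewinding_two_index
    {E : Type*} [NormedAddCommGroup E] [InnerProductSpace ℂ E] [FiniteDimensional ℂ E]
    {n m : ℕ} (hn : 0 < n) (hm : 0 < m)
    (P : Fin n → Fin m → (E →ₗ[ℂ] E))
    (hproj : ∀ i j, (P i j) ∘ₗ (P i j) = P i j)
    (hsym : ∀ i j, (P i j).IsSymmetric)
    (ψ : E) (hψ : ‖ψ‖ = 1) :
    (1 / ((n : ℝ) ^ 2 * (m : ℝ) ^ 3)) *
      ∑ i₁ : Fin n, ∑ i₂ : Fin n, ∑ j₁ : Fin m, ∑ j₂ : Fin m, ∑ j₃ : Fin m,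
        ‖P i₂ j₃ (P i₂ j₂ (P i₁ j₁ ψ))‖ ^ 2
      ≥ ((1 / ((n : ℝ) * (m : ℝ))) * ∑ i : Fin n, ∑ j : Fin m, ‖P i j ψ‖ ^ 2) ^ 6 :=
  projection_rewinding_two_index_general P hproj hsym ψ hψ
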